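/- arXiv:2006.03470 — 4 statements merged into one kernel-verified Lean document; each statement's English description precedes it below -/
import Mathlib

section
/- Let k > 2 be an integer and let u₁, …, u_n be zero-one vectors in (ℤ/k)^n. Construct in (ℤ/k)^(n·n) the elements ξ_i (the concatenation of blocks b_{i,u_{i1}}, …, b_{i,u_{in}}, where b_{i,v} is the zero block if v = 0 and the block with 1 in position i if v = 1), the elements δ_{ij} for 1 ≤ i ≤ n, 1 ≤ j ≤ n−1 (zero everywhere except −1 in position (i−1)n + j and +1 in position (i−1)n + j + 1), and the target ξ (each of the n blocks equal to the block with 1 in position n). If there exists a zero-one vector (x₁,…,x_n) ∈ ℤ^n with x₁u₁ + ⋯ + x_nu_n = (1,1,…,1), then ξ is a subset sum of the elements ξ₁,…,ξ_n, δ_{11},…,δ_{n,n−1} in (ℤ/k)^(n·n). -/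
/-- The blockwise vector `ξ_i ∈ (ℤ/k)^(n·n)`: block `j` (of length `n`) is the standard
basis block `e_i` if `u i j = 1`, and zero otherwise.  Coordinates are indexed by
`Fin n × Fin n` = (block, position). -/
def zoeXi (k n : ℕ) (u : Fin n → Fin n → ℤ) (i : Fin n) : Fin n × Fin n → ZMod k :=
  fun q => if u i q.1 = 1 ∧ q.2 = i then 1 else 0

/-- The shift element `δ_{ij} ∈ (ℤ/k)^(n·n)`: `-1` in coordinate `(i,j)` and `+1` in
coordinate `(i,j+1)`, zero elsewhere. -/
def zoeDelta (k n : ℕ) (i : Fin n) (j : Fin (n - 1)) : Fin n × Fin n → ZMod k :=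
  fun q =>
    if q.1 = i ∧ (q.2 : ℕ) = (j : ℕ) then -1
    else if q.1 = i ∧ (q.2 : ℕ) = (j : ℕ) + 1 then 1 else 0

/-- The target `ξ ∈ (ℤ/k)^(n·n)`: every block equals `e_n` (i.e. `1` in the last
position of each block). -/
def zoeTarget (k n : ℕ) : Fin n × Fin n → ZMod k :=
  fun q => if (q.2 : ℕ) = n - 1 then 1 else 0

/-- If the ZOE instance `(u₁,…,u_n)` has a zero-one solution over `ℤ`, then the target `ξ`
is a subset sum of `ξ₁,…,ξ_n, δ_{11},…,δ_{n,n-1}` in `(ℤ/k)^(n·n)`. -/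
theorem zoe_to_ssp (k n : ℕ) (hk : 2 < k) (u : Fin n → Fin n → ℤ)
    (hu : ∀ i j, u i j = 0 ∨ u i j = 1)
    (hzoe : ∃ x : Fin n → ℤ, (∀ i, x i = 0 ∨ x i = 1) ∧ ∀ j, ∑ i, x i * u i j = 1) :
    ∃ (T : Finset (Fin n)) (D : Finset (Fin n × Fin (n - 1))),
      (∑ i ∈ T, zoeXi k n u i) + (∑ q ∈ D, zoeDelta k n q.1 q.2) = zoeTarget k n := by
  obtain ⟨x, hx01, hxsum⟩ := hzoe
  have hex : ∀ b : Fin n, ∃ i, x i = 1 ∧ u i b = 1 := by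
    intro b
    by_contra h
    push_neg at h
    have hz : ∀ i, x i * u i b = 0 := by
      intro i
      rcases hx01 i with h1 | h1
      · simp [h1]
      · rcases hu i b with h2 | h2
        · simp [h2]
        · exact absurd h2 (h i h1)
    have hz0 : ∑ i, x i * u i b = 0 := Finset.sum_eq_zero (fun i _ => hz i)
    have := hxsum b
    omega
  choose f hf1 hf2 using hex
  have huniq : ∀ (b : Fin n) (i : Fin n), x i = 1 → u i b = 1 → i = f b := by
    intro b i hxi hui
    by_contra hne
    have hpair : ∑ j ∈ ({i, f b} : Finset (Fin n)), x j * u j b = 2 := by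
      rw [Finset.sum_pair hne, hxi, hui, hf1 b, hf2 b]; ring
    have hle : ∑ j ∈ ({i, f b} : Finset (Fin n)), x j * u j b ≤ ∑ j, x j * u j b := by
      apply Finset.sum_le_sum_of_subset_of_nonneg (Finset.subset_univ _)
      intro j _ _
      rcases hx01 j with h1 | h1 <;> rcases hu j b with h2 | h2 <;> simp [h1, h2]
    have := hxsum b
    omega
  refine ⟨Finset.univ.filter (fun i => x i = 1),
          Finset.univ.filter (fun q : Fin n × Fin (n - 1) => (f q.1 : ℕ) ≤ (q.2 : ℕ)), ?_⟩
  funext q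
  obtain ⟨b, p⟩ := q
  simp only [Pi.add_apply, Finset.sum_apply]
  have hA : (∑ i ∈ Finset.univ.filter (fun i => x i = 1), zoeXi k n u i (b, p))
      = if (p : ℕ) = (f b : ℕ) then (1 : ZMod k) else 0 := by
    have hterm : ∀ i, zoeXi k n u i (b, p)
        = if p = i then (if u i b = 1 then (1 : ZMod k) else 0) else 0 := by
      intro i
      unfold zoeXi
      by_cases h1 : p = i <;> by_cases h2 : u i b = 1 <;> simp [h1, h2]
    rw [Finset.sum_congr rfl (fun i _ => hterm i), Finset.sum_ite_eq]
    by_cases h1 : x p = 1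
    · by_cases h2 : u p b = 1
      · have hp : p = f b := huniq b p h1 h2
        simp [hp, hf1 b, hf2 b]
      · have hp : (p : ℕ) ≠ (f b : ℕ) := by
          intro hc
          exact h2 ((Fin.ext hc : p = f b) ▸ hf2 b)
        simp [h1, h2, hp]
    · have hp : (p : ℕ) ≠ (f b : ℕ) := by
        intro hc
        exact h1 ((Fin.ext hc : p = f b) ▸ hf1 b)
      simp [h1, hp]
  have hB : (∑ q ∈ Finset.univ.filter (fun q : Fin n × Fin (n - 1) => (f q.1 : ℕ) ≤ (q.2 : ℕ)),
        zoeDelta k n q.1 q.2 (b, p))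
      = ∑ j ∈ Finset.range (n - 1),
          ((if (f b : ℕ) ≤ j ∧ (p : ℕ) = j then (-1 : ZMod k) else 0)
            + (if (f b : ℕ) ≤ j ∧ (p : ℕ) = j + 1 then (1 : ZMod k) else 0)) := by
    rw [Finset.sum_filter, Fintype.sum_prod_type]
    rw [Finset.sum_eq_single b (fun i _ hib => ?_) (by simp)]
    · have hterm : ∀ j : Fin (n - 1),
          (if (f b : ℕ) ≤ (j : ℕ) then zoeDelta k n b j (b, p) else 0)
          = ((if (f b : ℕ) ≤ (j : ℕ) ∧ (p : ℕ) = (j : ℕ) then (-1 : ZMod k) else 0)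
              + (if (f b : ℕ) ≤ (j : ℕ) ∧ (p : ℕ) = (j : ℕ) + 1 then (1 : ZMod k) else 0)) := by
        intro j
        unfold zoeDelta
        simp only [true_and]
        split_ifs <;> first | (exfalso; omega) | norm_num
      rw [Finset.sum_congr rfl (fun j _ => hterm j)]
      exact Fin.sum_univ_eq_sum_range
        (fun m => (if (f b : ℕ) ≤ m ∧ (p : ℕ) = m then (-1 : ZMod k) else 0)
          + (if (f b : ℕ) ≤ m ∧ (p : ℕ) = m + 1 then (1 : ZMod k) else 0)) (n - 1)
    · apply Finset.sum_eq_zero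
      intro j _
      have hd : zoeDelta k n i j (b, p) = 0 := by
        unfold zoeDelta
        simp [Ne.symm hib]
      simp [hd]
  have hS1 : (∑ j ∈ Finset.range (n - 1),
        (if (f b : ℕ) ≤ j ∧ (p : ℕ) = j then (-1 : ZMod k) else 0))
      = if (f b : ℕ) ≤ (p : ℕ) ∧ (p : ℕ) < n - 1 then (-1 : ZMod k) else 0 := by
    by_cases h : (f b : ℕ) ≤ (p : ℕ) ∧ (p : ℕ) < n - 1
    · rw [if_pos h, Finset.sum_eq_single_of_mem (p : ℕ) (Finset.mem_range.2 h.2)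
        (fun m _ hm => by rw [if_neg]; omega)]
      rw [if_pos ⟨h.1, rfl⟩]
    · rw [if_neg h]
      apply Finset.sum_eq_zero
      intro m hm
      have := Finset.mem_range.1 hm
      rw [if_neg]; omega
  have hS2 : (∑ j ∈ Finset.range (n - 1),
        (if (f b : ℕ) ≤ j ∧ (p : ℕ) = j + 1 then (1 : ZMod k) else 0))
      = if (f b : ℕ) < (p : ℕ) then (1 : ZMod k) else 0 := by
    have hpn : (p : ℕ) < n := p.isLt
    by_cases h : (f b : ℕ) < (p : ℕ)
    · rw [if_pos h, Finset.sum_eq_single_of_mem ((p : ℕ) - 1)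
        (Finset.mem_range.2 (by omega)) (fun m _ hm => by rw [if_neg]; omega)]
      rw [if_pos ⟨by omega, by omega⟩]
    · rw [if_neg h]
      apply Finset.sum_eq_zero
      intro m hm
      rw [if_neg]; omega
  rw [hA, hB, Finset.sum_add_distrib, hS1, hS2]
  unfold zoeTarget
  simp only
  have hpn : (p : ℕ) < n := p.isLt
  have hfn : (f b : ℕ) < n := (f b).isLt
  split_ifs <;> first | (exfalso; omega) | norm_num
end

section
/- With notation as in the construction (k > 2, zero-one vectors u₁,…,u_n ∈ (ℤ/k)^n, elements ξ₁,…,ξ_n, δ_{11},…,δ_{n,n−1}, ξ in (ℤ/k)^(n·n)): if ξ is a subset sum of ξ₁,…,ξ_n, δ_{11},…,δ_{n,n−1}, then there exists a zero-one vector (x₁,…,x_n) ∈ ℤ^n with x₁u₁ + ⋯ + x_nu_n = (1,…,1). Consequently, the ZOE instance (u₁,…,u_n) is positive if and only if the constructed subset sum instance is positive. -/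
lemma zoe_zmod_zero {k : ℕ} (hk : 2 < k) {a : ℤ} (h1 : -3 < a) (h2 : a < 3)
    (h : ((a : ZMod k)) = 0) : a = 0 := by
  have hd : (k : ℤ) ∣ a := (ZMod.intCast_zmod_eq_zero_iff_dvd a k).mp h
  obtain ⟨t, ht⟩ := hd
  have hk' : (3:ℤ) ≤ (k:ℤ) := by exact_mod_cast hk
  rcases lt_trichotomy t 0 with h'|h'|h'
  · nlinarith
  · rw [h', mul_zero] at ht; omega
  · nlinarith

def zoeEI (n : ℕ) (u : Fin n → Fin n → ℤ) (T : Finset (Fin n)) (b : Fin n) (m : ℕ) : ℤ :=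
  if h : m < n then (if (⟨m, h⟩ : Fin n) ∈ T ∧ u ⟨m, h⟩ b = 1 then 1 else 0) else 0

def zoeDI (n : ℕ) (D : Finset (Fin n × Fin (n-1))) (b : Fin n) (m : ℕ) : ℤ :=
  if h : m < n - 1 then (if (b, (⟨m, h⟩ : Fin (n-1))) ∈ D then 1 else 0) else 0

lemma zoeEI_bound (n : ℕ) (u : Fin n → Fin n → ℤ) (T : Finset (Fin n)) (b : Fin n) (m : ℕ) :
    0 ≤ zoeEI n u T b m ∧ zoeEI n u T b m ≤ 1 := by unfold zoeEI; split_ifs <;> norm_num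

lemma zoeDI_bound (n : ℕ) (D : Finset (Fin n × Fin (n-1))) (b : Fin n) (m : ℕ) :
    0 ≤ zoeDI n D b m ∧ zoeDI n D b m ≤ 1 := by unfold zoeDI; split_ifs <;> norm_num

lemma zoeDI_of_ge (n : ℕ) (D : Finset (Fin n × Fin (n-1))) (b : Fin n) {m : ℕ}
    (h : n - 1 ≤ m) : zoeDI n D b m = 0 := by unfold zoeDI; rw [dif_neg (by omega)]

lemma zoeXi_sum (k n : ℕ) (u : Fin n → Fin n → ℤ) (T : Finset (Fin n)) (b m : Fin n) :
    (∑ i ∈ T, zoeXi k n u i) (b, m) = ((zoeEI n u T b (m : ℕ) : ℤ) : ZMod k) := by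
  classical
  rw [Finset.sum_apply]
  have h1 : ∀ i ∈ T, zoeXi k n u i (b, m)
      = if m = i then (if u m b = 1 then (1 : ZMod k) else 0) else 0 := by
    intro i _
    unfold zoeXi
    by_cases h : m = i
    · subst h; simp
    · simp [h]
  rw [Finset.sum_congr rfl h1, Finset.sum_ite_eq T m]
  unfold zoeEI
  rw [dif_pos m.isLt]
  simp only [Fin.eta]
  by_cases h1 : m ∈ T <;> by_cases h2 : u m b = 1 <;> simp [h1, h2]

lemma zoeDelta_eq (k n : ℕ) (i : Fin n) (j : Fin (n-1)) (q : Fin n × Fin n) :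
    zoeDelta k n i j q =
      (if q.1 = i ∧ (q.2 : ℕ) = (j : ℕ) + 1 then (1 : ZMod k) else 0)
      - (if q.1 = i ∧ (q.2 : ℕ) = (j : ℕ) then 1 else 0) := by
  unfold zoeDelta
  by_cases h1 : q.1 = i ∧ (q.2:ℕ) = (j:ℕ)
  · have h2 : ¬ (q.1 = i ∧ (q.2:ℕ) = (j:ℕ)+1) := by rintro ⟨_, h⟩; omega
    simp [h1, h2]
  · by_cases h2 : q.1 = i ∧ (q.2:ℕ) = (j:ℕ)+1 <;> simp [h1, h2]

lemma zoeDelta_sum (k n : ℕ) (D : Finset (Fin n × Fin (n-1))) (b m : Fin n) :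
    (∑ p ∈ D, zoeDelta k n p.1 p.2) (b, m) =
      (if 0 < (m:ℕ) then ((zoeDI n D b ((m:ℕ) - 1) : ℤ) : ZMod k) else 0)
      - ((zoeDI n D b (m:ℕ) : ℤ) : ZMod k) := by
  classical
  rw [Finset.sum_apply]
  simp_rw [zoeDelta_eq]
  rw [Finset.sum_sub_distrib]
  congr 1
  · by_cases hm : 0 < (m:ℕ)
    · rw [if_pos hm]
      have hlt : (m:ℕ) - 1 < n - 1 := by have := m.isLt; omega
      have h1 : ∀ p ∈ D, (if b = p.1 ∧ (m:ℕ) = (p.2:ℕ) + 1 then (1:ZMod k) else 0)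
          = if p = (b, (⟨(m:ℕ)-1, hlt⟩ : Fin (n-1))) then 1 else 0 := by
        intro p _
        apply if_congr _ rfl rfl
        constructor
        · rintro ⟨hb, hv⟩
          refine Prod.ext hb.symm (Fin.ext ?_)
          simp; omega
        · rintro rfl
          refine ⟨rfl, ?_⟩
          simp; omega
      rw [Finset.sum_congr rfl h1, Finset.sum_ite_eq' D _ (fun _ => (1:ZMod k))]
      unfold zoeDI
      rw [dif_pos hlt]
      split_ifs <;> simp
    · rw [if_neg hm]
      rw [Finset.sum_eq_zero]
      intro p _
      rw [if_neg]
      rintro ⟨_, hv⟩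
      omega
  · by_cases hm : (m:ℕ) < n - 1
    · have h1 : ∀ p ∈ D, (if b = p.1 ∧ (m:ℕ) = (p.2:ℕ) then (1:ZMod k) else 0)
          = if p = (b, (⟨(m:ℕ), hm⟩ : Fin (n-1))) then 1 else 0 := by
        intro p _
        apply if_congr _ rfl rfl
        constructor
        · rintro ⟨hb, hv⟩
          exact Prod.ext hb.symm (Fin.ext (by simp [hv]))
        · rintro rfl; exact ⟨rfl, by simp⟩
      rw [Finset.sum_congr rfl h1, Finset.sum_ite_eq' D _ (fun _ => (1:ZMod k))]
      unfold zoeDI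
      rw [dif_pos hm]
      split_ifs <;> simp
    · rw [show zoeDI n D b (m:ℕ) = 0 from by unfold zoeDI; rw [dif_neg hm]]
      rw [Finset.sum_eq_zero]
      · simp
      intro p _
      rw [if_neg]
      rintro ⟨_, hv⟩
      have := p.2.isLt
      omega

lemma zoe_key (k n : ℕ) (hk : 2 < k) (u : Fin n → Fin n → ℤ)
    (T : Finset (Fin n)) (D : Finset (Fin n × Fin (n-1))) (b : Fin n)
    (H : ∀ m, m < n → ((zoeEI n u T b m + (if 0 < m then zoeDI n D b (m-1) else 0)
        - zoeDI n D b m - (if m = n - 1 then 1 else 0) : ℤ) : ZMod k) = 0) :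
    ∀ m, m < n → ∑ p ∈ Finset.range (m+1), zoeEI n u T b p
        = if m < n - 1 then zoeDI n D b m else 1 := by
  intro m
  induction m with
  | zero =>
    intro hm
    have h0 := H 0 hm
    rw [if_neg (by omega)] at h0
    have hb1 := zoeEI_bound n u T b 0
    have hb2 := zoeDI_bound n D b 0
    rw [Finset.sum_range_one]
    by_cases hn : 0 < n - 1
    · rw [if_pos hn]
      rw [if_neg (by omega)] at h0
      have := zoe_zmod_zero hk (by omega) (by omega) h0
      omega
    · rw [if_neg hn]
      rw [if_pos (by omega)] at h0
      have hd0 : zoeDI n D b 0 = 0 := zoeDI_of_ge n D b (by omega)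
      rw [hd0] at h0
      have := zoe_zmod_zero hk (by omega) (by omega) h0
      omega
  | succ m ih =>
    intro hm
    have hm' : m < n := by omega
    have hmlt : m < n - 1 := by omega
    have hprev := ih hm'
    rw [if_pos hmlt] at hprev
    have h0 := H (m+1) hm
    rw [if_pos (by omega), Nat.add_sub_cancel] at h0
    have hb1 := zoeEI_bound n u T b (m+1)
    have hb2 := zoeDI_bound n D b m
    have hb3 := zoeDI_bound n D b (m+1)
    rw [Finset.sum_range_succ, hprev]
    by_cases h2 : m + 1 < n - 1
    · rw [if_pos h2]
      rw [if_neg (by omega)] at h0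
      have := zoe_zmod_zero hk (by omega) (by omega) h0
      omega
    · rw [if_neg h2]
      rw [if_pos (by omega)] at h0
      have hd0 : zoeDI n D b (m+1) = 0 := zoeDI_of_ge n D b (by omega)
      rw [hd0] at h0
      have := zoe_zmod_zero hk (by omega) (by omega) h0
      omega

/-- The ZOE instance `(u₁,…,u_n)` is positive if and only if the constructed
subset sum instance in `(ℤ/k)^(n·n)` is positive; in particular a subset sum
solution yields a zero-one solution of the ZOE instance over `ℤ`. -/
theorem ssp_iff_zoe (k n : ℕ) (hk : 2 < k) (u : Fin n → Fin n → ℤ)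
    (hu : ∀ i j, u i j = 0 ∨ u i j = 1) :
    (∃ (T : Finset (Fin n)) (D : Finset (Fin n × Fin (n - 1))),
        (∑ i ∈ T, zoeXi k n u i) + (∑ q ∈ D, zoeDelta k n q.1 q.2) = zoeTarget k n) ↔
      ∃ x : Fin n → ℤ, (∀ i, x i = 0 ∨ x i = 1) ∧ ∀ j, ∑ i, x i * u i j = 1 := by
  classical
  rcases Nat.eq_zero_or_pos n with hn | hn
  · subst hn
    constructor
    · rintro -
      exact ⟨fun i => 0, fun i => i.elim0, fun j => j.elim0⟩
    · rintro -
      exact ⟨∅, ∅, funext fun q => q.1.elim0⟩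
  constructor
  · rintro ⟨T, D, H⟩
    -- coordinate equations
    have Hc : ∀ (b : Fin n), ∀ m, m < n →
        ((zoeEI n u T b m + (if 0 < m then zoeDI n D b (m-1) else 0)
          - zoeDI n D b m - (if m = n - 1 then 1 else 0) : ℤ) : ZMod k) = 0 := by
      intro b m hm
      have h1 := congrFun H (b, (⟨m, hm⟩ : Fin n))
      rw [Pi.add_apply, zoeXi_sum, zoeDelta_sum] at h1
      simp only [zoeTarget, Fin.val_mk] at h1
      have e1 : (if 0 < m then ((zoeDI n D b (m-1) : ℤ) : ZMod k) else 0)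
          = (((if 0 < m then zoeDI n D b (m-1) else 0 : ℤ)) : ZMod k) := by
        split_ifs <;> simp
      have e2 : (if m = n-1 then (1 : ZMod k) else 0)
          = (((if m = n-1 then 1 else 0 : ℤ)) : ZMod k) := by
        split_ifs <;> simp
      rw [e1, e2] at h1
      push_cast
      push_cast at h1
      linear_combination h1
    have hkey : ∀ b : Fin n, ∑ p ∈ Finset.range n, zoeEI n u T b p = 1 := by
      intro b
      have := zoe_key k n hk u T D b (Hc b) (n-1) (by omega)
      rw [if_neg (by omega)] at this
      rw [show n - 1 + 1 = n from by omega] at this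
      exact this
    refine ⟨fun i => if i ∈ T then 1 else 0, fun i => by by_cases h : i ∈ T <;> simp [h], ?_⟩
    intro j
    have heq : ∀ i : Fin n, (if i ∈ T then (1:ℤ) else 0) * u i j = zoeEI n u T j (i:ℕ) := by
      intro i
      unfold zoeEI
      rw [dif_pos i.isLt]
      simp only [Fin.eta]
      rcases hu i j with h | h <;> by_cases hT : i ∈ T <;> simp [h, hT]
    rw [Finset.sum_congr rfl (fun i _ => heq i)]
    rw [Fin.sum_univ_eq_sum_range (fun p => zoeEI n u T j p) n]
    exact hkey j
  · rintro ⟨x, hx01, hxsum⟩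
    have hcard : ∀ b : Fin n,
        (Finset.univ.filter (fun i => x i = 1 ∧ u i b = 1)).card = 1 := by
      intro b
      have h1 : ∀ i : Fin n, x i * u i b = if x i = 1 ∧ u i b = 1 then (1:ℤ) else 0 := by
        intro i
        rcases hx01 i with h | h <;> rcases hu i b with h' | h' <;> simp [h, h']
      have h2 := hxsum b
      rw [Finset.sum_congr rfl (fun i _ => h1 i)] at h2
      rw [Finset.sum_boole] at h2
      exact_mod_cast h2
    have hex : ∀ b : Fin n, ∃ a, Finset.univ.filter (fun i => x i = 1 ∧ u i b = 1) = {a} :=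
      fun b => Finset.card_eq_one.mp (hcard b)
    choose i0 hi0 using hex
    have hiff : ∀ b i : Fin n, (x i = 1 ∧ u i b = 1) ↔ i = i0 b := by
      intro b i
      have := Finset.ext_iff.mp (hi0 b) i
      simpa using this
    refine ⟨Finset.univ.filter (fun i => x i = 1),
      Finset.univ.filter (fun q : Fin n × Fin (n-1) => ((i0 q.1 : ℕ) ≤ (q.2 : ℕ))), ?_⟩
    funext q
    obtain ⟨b, m⟩ := q
    rw [Pi.add_apply, zoeXi_sum, zoeDelta_sum]
    have hz : zoeEI n u (Finset.univ.filter (fun i => x i = 1)) b (m:ℕ)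
        + (if 0 < (m:ℕ) then
            zoeDI n (Finset.univ.filter (fun q : Fin n × Fin (n-1) => ((i0 q.1 : ℕ) ≤ (q.2 : ℕ)))) b ((m:ℕ)-1) else 0)
        - zoeDI n (Finset.univ.filter (fun q : Fin n × Fin (n-1) => ((i0 q.1 : ℕ) ≤ (q.2 : ℕ)))) b (m:ℕ)
        = (if (m:ℕ) = n - 1 then 1 else 0) := by
      have hiT : ((m ∈ Finset.univ.filter (fun i => x i = 1)) ∧ u m b = 1) ↔ (m:ℕ) = (i0 b:ℕ) := by
        simp only [Finset.mem_filter, Finset.mem_univ, true_and, and_assoc]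
        rw [hiff b m, Fin.ext_iff]
      unfold zoeEI zoeDI
      rw [dif_pos m.isLt]
      simp only [Fin.eta, Finset.mem_filter, Finset.mem_univ, true_and, Fin.val_mk]
      simp only [show (x m = 1 ∧ u m b = 1) ↔ ((m:ℕ) = (i0 b:ℕ)) from
            by rw [hiff b m, Fin.ext_iff]]
      have h1 := m.isLt
      have h2 := (i0 b).isLt
      split_ifs <;> omega
    have e1 : (if 0 < (m:ℕ) then
          ((zoeDI n (Finset.univ.filter (fun q : Fin n × Fin (n-1) => ((i0 q.1 : ℕ) ≤ (q.2 : ℕ)))) b ((m:ℕ)-1) : ℤ) : ZMod k) else 0)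
        = (((if 0 < (m:ℕ) then
          zoeDI n (Finset.univ.filter (fun q : Fin n × Fin (n-1) => ((i0 q.1 : ℕ) ≤ (q.2 : ℕ)))) b ((m:ℕ)-1) else 0 : ℤ)) : ZMod k) := by
      split_ifs <;> simp
    have e2 : zoeTarget k n (b, m) = (((if (m:ℕ) = n - 1 then 1 else 0 : ℤ)) : ZMod k) := by
      unfold zoeTarget
      split_ifs <;> simp
    rw [e1, e2, ← hz]
    push_cast
    ring
end

section
/- Let G be a group, and let φ₀, φ₁ : K → K be injective group homomorphisms from a subgroup K ≤ G to itself such that the images φ₀(K) and φ₁(K) commute elementwise and φ₀(K) ∩ φ₁(K) = {1}. For a binary string w = i₁…i_ℓ write φ_w = φ_{i₁} ∘ ⋯ ∘ φ_{i_ℓ}. Let d ∈ K be an element of order k (2 < k ≤ ∞). Then for the family of binary strings W = { 1^j 0 i₁…i_j : 0 ≤ j ≤ p, i₁,…,i_j ∈ {0,1} } (of cardinality 2^{p+1} − 1), the elements a_w = φ_w(d), w ∈ W, each have order k, and the subgroup they generate is the internal direct sum of the cyclic subgroups ⟨a_w⟩; in particular ⟨a_w : w ∈ W⟩ ≅ (ℤ/k)^{2^{p+1}−1}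 (or ℤ^{2^{p+1}−1} if k = ∞). -/
/-- Composition `φ_{i₁} ∘ ⋯ ∘ φ_{i_ℓ}` of a pair of endomorphisms along a binary string. -/
def compWord {M : Type*} [Monoid M] (φ : Bool → (M →* M)) : List Bool → (M →* M)
  | [] => MonoidHom.id M
  | i :: w => (φ i).comp (compWord φ w)

/-- The family of binary strings `1^j 0 i₁…i_j`, `0 ≤ j ≤ p` (`true = 1`, `false = 0`). -/
def wordSet (p : ℕ) : Set (List Bool) :=
  {l | ∃ j ≤ p, ∃ w : List Bool, w.length = j ∧ l = List.replicate j true ++ false :: w}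

/-! The key observation is that `(x, y) ↦ φ₀ x * φ₁ y` is an injective homomorphism
`K × K → K`, so `K` contains a copy of `K × K` in which `φ₀` and `φ₁` are the two coordinate
inclusions. Iterating, the elements `φ_w(d)` for `w` in a prefix-free set of words sit in
pairwise different coordinates of an iterated product, hence commute and are independent.
The strings `1^j 0 i₁…i_j` form such a prefix-free set, and there are `∑_{j ≤ p} 2^j` of them. -/

open Subgroup

section Branching

variable {M : Type*} [Group M] (φ : Bool → M →* M)

theorem compWord_injective (hinj : ∀ i, Function.Injective (φ i)) :
    ∀ w : List Bool, Function.Injective (compWord φ w)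
  | [] => Function.injective_id
  | i :: w => (hinj i).comp (compWord_injective hinj w)

theorem commute_compWord_of_not_prefix (hcomm : ∀ x y : M, Commute (φ false x) (φ true y))
    (x y : M) : ∀ {u u' : List Bool}, ¬u <+: u' → ¬u' <+: u →
      Commute (compWord φ u x) (compWord φ u' y)
  | [], _, h, _ => absurd List.nil_prefix h
  | _, [], _, h => absurd List.nil_prefix h
  | false :: _, true :: _, _, _ => hcomm _ _
  | true :: _, false :: _, _, _ => (hcomm _ _).symm
  | false :: _, false :: _, h, h' =>
    (commute_compWord_of_not_prefix hcomm x y (mt (List.prefix_cons_inj _).mpr h)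
      (mt (List.prefix_cons_inj _).mpr h')).map (φ false)
  | true :: _, true :: _, h, h' =>
    (commute_compWord_of_not_prefix hcomm x y (mt (List.prefix_cons_inj _).mpr h)
      (mt (List.prefix_cons_inj _).mpr h')).map (φ true)

variable {φ} (hcomm : ∀ x y : M, Commute (φ false x) (φ true y)) (d : M)

theorem closure_compWord_le_map_prod {S : Set (List Bool)} (hS : [] ∉ S) :
    closure ((fun u => compWord φ u d) '' S) ≤
      ((closure ((fun u => compWord φ u d) '' (List.cons false ⁻¹' S))).prod
        (closure ((fun u => compWord φ u d) '' (List.cons true ⁻¹' S)))).map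
        ((φ false).noncommCoprod (φ true) hcomm) := by
  rw [closure_le]
  rintro _ ⟨_ | ⟨_ | _, u⟩, hu, rfl⟩
  · exact absurd hu hS
  · exact ⟨(compWord φ u d, 1), ⟨subset_closure ⟨u, hu, rfl⟩, one_mem _⟩, by simp [compWord]⟩
  · exact ⟨(1, compWord φ u d), ⟨one_mem _, subset_closure ⟨u, hu, rfl⟩⟩, by simp [compWord]⟩

variable {hcomm}

theorem mem_closure_preimage_cons
    (hψ : Function.Injective ((φ false).noncommCoprod (φ true) hcomm)) {S : Set (List Bool)} (hS : [] ∉ S) {b : Bool} {y : M}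
    (hy : φ b y ∈ closure ((fun u => compWord φ u d) '' S)) :
    y ∈ closure ((fun u => compWord φ u d) '' (List.cons b ⁻¹' S)) := by
  have hy := closure_compWord_le_map_prod hcomm d hS hy
  cases b
  · rw [show φ false y = (φ false).noncommCoprod (φ true) hcomm (y, 1) by simp,
      mem_map_iff_mem hψ] at hy
    exact (mem_prod.mp hy).1
  · rw [show φ true y = (φ false).noncommCoprod (φ true) hcomm (1, y) by simp,
      mem_map_iff_mem hψ] at hy
    exact (mem_prod.mp hy).2

theorem eq_one_of_compWord_mem_closure
    (hψ : Function.Injective ((φ false).noncommCoprod (φ true) hcomm)) :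
    ∀ {v : List Bool} {V : Set (List Bool)}, IsAntichain List.IsPrefix V → v ∈ V → ∀ {x : M},
      compWord φ v x ∈ closure ((fun u => compWord φ u d) '' (V \ {v})) → x = 1
  | [], V, hV, hv, x, hx => by
    have hempty : V \ {[]} = ∅ := Set.eq_empty_of_forall_notMem fun u ⟨hu, hne⟩ =>
      hV hv hu (Ne.symm hne) List.nil_prefix
    simpa [hempty, compWord] using hx
  | b :: v, V, hV, hv, x, hx => by
    have hnil : [] ∉ V \ {b :: v} := fun ⟨hnil, hne⟩ => hV hnil hv hne List.nil_prefix
    have htail := mem_closure_preimage_cons d hψ hnil hx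
    rw [Set.preimage_sdiff, ← Set.image_singleton, List.cons_injective.preimage_image] at htail
    exact eq_one_of_compWord_mem_closure hψ
      (hV.preimage List.cons_injective fun _ _ h => (List.prefix_cons_inj b).mpr h) hv htail

theorem zpowers_compWord_inf_closure_eq_bot
    (hψ : Function.Injective ((φ false).noncommCoprod (φ true) hcomm))
    {V : Set (List Bool)} (hV : IsAntichain List.IsPrefix V) {v : List Bool} (hv : v ∈ V) :
    zpowers (compWord φ v d) ⊓ closure ((fun u => compWord φ u d) '' (V \ {v})) = ⊥ := by
  rw [eq_bot_iff_forall]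
  rintro _ ⟨hn, hclosure⟩
  obtain ⟨n, rfl⟩ := mem_zpowers_iff.mp hn
  rw [← map_zpow] at hclosure ⊢
  rw [eq_one_of_compWord_mem_closure d hψ hV hv hclosure, map_one]

end Branching

theorem replicate_true_append_false_cons_prefix_iff {j j' : ℕ} {w w' : List Bool} :
    List.replicate j true ++ false :: w <+: List.replicate j' true ++ false :: w' ↔
      j = j' ∧ w <+: w' := by
  induction j generalizing j' with
  | zero => cases j' <;> simp [List.replicate_succ]
  | succ j ih => cases j' <;> simp [List.replicate_succ, ih]

def branchWord (w : List Bool) : List Bool :=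
  List.replicate w.length true ++ false :: w

theorem branchWord_prefix_iff {w w' : List Bool} : branchWord w <+: branchWord w' ↔ w = w' := by
  refine ⟨fun h => ?_, fun h => h ▸ List.prefix_refl _⟩
  obtain ⟨hlen, hw⟩ := replicate_true_append_false_cons_prefix_iff.mp h
  exact hw.eq_of_length hlen

theorem branchWord_injective : Function.Injective branchWord :=
  fun _ _ h => branchWord_prefix_iff.mp (h ▸ List.prefix_refl _)

theorem wordSet_eq_image (p : ℕ) : wordSet p = branchWord '' {w | w.length ≤ p} := by
  ext l
  constructor
  · rintro ⟨j, hj, w, rfl, rfl⟩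
    exact ⟨w, hj, rfl⟩
  · rintro ⟨w, hw, rfl⟩
    exact ⟨w.length, hw, w, rfl, rfl⟩

theorem isAntichain_prefix_wordSet (p : ℕ) : IsAntichain List.IsPrefix (wordSet p) := by
  rw [wordSet_eq_image]
  rintro _ ⟨w, -, rfl⟩ _ ⟨w', -, rfl⟩ hne h
  exact hne (congrArg branchWord (branchWord_prefix_iff.mp h))

theorem ncard_length_eq (n : ℕ) : {l : List Bool | l.length = n}.ncard = 2 ^ n := by
  rw [← Nat.card_coe_set_eq]
  exact (Nat.card_eq_fintype_card (α := List.Vector Bool n)).trans (by simp [card_vector])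

theorem ncard_length_le (p : ℕ) : {l : List Bool | l.length ≤ p}.ncard = 2 ^ (p + 1) - 1 := by
  induction p with
  | zero => simp
  | succ p ih =>
    have hsplit : {l : List Bool | l.length ≤ p + 1} =
        {l | l.length ≤ p} ∪ {l | l.length = p + 1} := by
      ext l
      simp only [Set.mem_ofPred_eq, Set.mem_union]
      omega
    have hdisj : Disjoint {l : List Bool | l.length ≤ p} {l | l.length = p + 1} :=
      Set.disjoint_left.mpr fun l h h' => by
        simp only [Set.mem_ofPred_eq] at h h'
        omega
    rw [hsplit, Set.ncard_union_eq hdisj (List.finite_length_le _ _) (List.finite_length_eq _ _),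
      ih, ncard_length_eq]
    have := Nat.one_le_two_pow (n := p + 1)
    rw [pow_succ 2 (p + 1)]
    omega

theorem ncard_wordSet (p : ℕ) : (wordSet p).ncard = 2 ^ (p + 1) - 1 := by
  rw [wordSet_eq_image, Set.ncard_image_of_injective _ branchWord_injective, ncard_length_le]

theorem branch_independent_cyclic_family_general {G : Type*} [Group G] (K : Subgroup G)
    (φ : Bool → (K →* K)) (hinj : ∀ i, Function.Injective (φ i))
    (hcomm : ∀ x y : K, Commute (φ false x) (φ true y))
    (htriv : ∀ x y : K, φ false x = φ true y → φ false x = 1)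
    (d : K) (p : ℕ) :
    (wordSet p).ncard = 2 ^ (p + 1) - 1 ∧
    (∀ w ∈ wordSet p, orderOf (compWord φ w d) = orderOf d) ∧
    (∀ w ∈ wordSet p, ∀ w' ∈ wordSet p, Commute (compWord φ w d) (compWord φ w' d)) ∧
    (∀ w ∈ wordSet p,
      Subgroup.zpowers (compWord φ w d) ⊓
        Subgroup.closure ((fun w' => compWord φ w' d) '' (wordSet p \ {w})) = ⊥) := by
  have hW := isAntichain_prefix_wordSet p
  have hψ : Function.Injective ((φ false).noncommCoprod (φ true) hcomm) := by
    refine (MonoidHom.noncommCoprod_injective _ _ _).mpr ⟨hinj false, hinj true, ?_⟩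
    rw [disjoint_iff_inf_le]
    rintro _ ⟨⟨x, rfl⟩, y, hy⟩
    exact htriv x y hy.symm
  refine ⟨ncard_wordSet p, fun w _ => orderOf_injective _ (compWord_injective φ hinj w) d,
    fun w hw w' hw' => ?_, fun w hw => zpowers_compWord_inf_closure_eq_bot d hψ hW hw⟩
  obtain rfl | hne := eq_or_ne w w'
  · exact Commute.refl _
  · exact commute_compWord_of_not_prefix φ hcomm d d (hW hw hw' hne) (hW hw' hw hne.symm)

/-- Given injective endomorphisms `φ₀, φ₁` of `K ≤ G` with elementwise commuting images
intersecting trivially, and `d ∈ K` of order `k` (`k = ∞` coded as `orderOf d = 0`, or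
`k > 2`), the `2^{p+1} - 1` elements `a_w = φ_w(d)`, `w ∈ W = {1^j 0 i₁…i_j : j ≤ p}`,
each have order `k`, commute pairwise, and generate the internal direct sum of the cyclic
subgroups `⟨a_w⟩`. -/
theorem branch_independent_cyclic_family {G : Type*} [Group G] (K : Subgroup G)
    (φ : Bool → (K →* K)) (hinj : ∀ i, Function.Injective (φ i))
    (hcomm : ∀ x y : K, Commute (φ false x) (φ true y))
    (htriv : ∀ x y : K, φ false x = φ true y → φ false x = 1)
    (d : K) (hd : orderOf d = 0 ∨ 2 < orderOf d) (p : ℕ) :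
    (wordSet p).ncard = 2 ^ (p + 1) - 1 ∧
    (∀ w ∈ wordSet p, orderOf (compWord φ w d) = orderOf d) ∧
    (∀ w ∈ wordSet p, ∀ w' ∈ wordSet p, Commute (compWord φ w d) (compWord φ w' d)) ∧
    (∀ w ∈ wordSet p,
      Subgroup.zpowers (compWord φ w d) ⊓
        Subgroup.closure ((fun w' => compWord φ w' d) '' (wordSet p \ {w})) = ⊥) :=
  branch_independent_cyclic_family_general K φ hinj hcomm htriv d p
end

section
/- Let G be a group and K ≤ G a subgroup equipped with injective homomorphisms φ₀, φ₁ : K → K whose images commute elementwise and intersect trivially. If K contains an element of infinite order, then G contains a subgroup isomorphic to the free abelian group ℤ^n for every n ≥ 1; if K contains an element of finite order k > 2, then G contains a subgroup isomorphic to (ℤ/k)^n for every n ≥ 1. -/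
/-! The map `(x, y) ↦ φ₀ x * φ₁ y` is an injective homomorphism `K × K → K`, since the images
commute and meet trivially; iterating it on the second factor embeds `K^n` into `K` for every `n`.
The cyclic subgroup generated by `d` is `ℤ / (orderOf d)` (which is `ℤ` when the order is infinite),
so its `n`-th power embeds into `K ≤ G`. -/

theorem exists_injective_zmod_orderOf {H : Type*} [Group H] (d : H) :
    ∃ f : Multiplicative (ZMod (orderOf d)) →* H, Function.Injective f := by
  rw [← Nat.card_zpowers]
  let e := zmodCyclicMulEquiv (Subgroup.isCyclic_zpowers d)
  exact ⟨(Subgroup.zpowers d).subtype.comp e.toMonoidHom,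
    (Subgroup.zpowers d).subtype_injective.comp e.injective⟩

section

variable {H : Type*} [Monoid H]

theorem exists_injective_fin_pi_of_injective_prod (ψ : H × H →* H) (hψ : Function.Injective ψ)
    (n : ℕ) : ∃ Φ : (Fin n → H) →* H, Function.Injective Φ := by
  induction n with
  | zero => exact ⟨1, fun _ _ _ => Subsingleton.elim _ _⟩
  | succ n ih =>
    obtain ⟨Φ, hΦ⟩ := ih
    let tail : (Fin (n + 1) → H) →* (Fin n → H) :=
      MonoidHom.pi fun i => Pi.evalMonoidHom (fun _ => H) i.succ
    refine ⟨ψ.comp ((Pi.evalMonoidHom (fun _ => H) 0).prod (Φ.comp tail)), hψ.comp ?_⟩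
    intro f g hfg
    obtain ⟨h0, htail⟩ := Prod.ext_iff.mp hfg
    rw [← Fin.cons_self_tail f, ← Fin.cons_self_tail g]
    exact congrArg₂ Fin.cons h0 (hΦ htail)

theorem exists_injective_pi_multiplicative {ι A : Type*} [AddMonoid A]
    {Φ : (ι → H) →* H} (hΦ : Function.Injective Φ)
    {g : Multiplicative A →* H} (hg : Function.Injective g) :
    ∃ f : Multiplicative (ι → A) →* H, Function.Injective f :=
  ⟨Φ.comp ((MonoidHom.piMap fun _ => g).comp (MulEquiv.piMultiplicative fun _ => A).toMonoidHom),
    hΦ.comp ((Pi.map_injective.mpr fun _ => hg).comp (MulEquiv.piMultiplicative _).injective)⟩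

end

/-- If a subgroup `K ≤ G` admits injective endomorphisms `φ₀, φ₁` with elementwise
commuting images intersecting trivially, then: an element of `K` of infinite order gives
subgroups of `G` isomorphic to `ℤ^n` for every `n ≥ 1`, and an element of finite order
`k > 2` gives subgroups isomorphic to `(ℤ/k)^n` for every `n ≥ 1`. -/
theorem branch_contains_large_abelian {G : Type*} [Group G] (K : Subgroup G)
    (φ : Bool → (K →* K)) (hinj : ∀ i, Function.Injective (φ i))
    (hcomm : ∀ x y : K, Commute (φ false x) (φ true y))
    (htriv : ∀ x y : K, φ false x = φ true y → φ false x = 1) :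
    (∀ d : K, orderOf d = 0 → ∀ n : ℕ, 1 ≤ n →
        ∃ f : Multiplicative (Fin n → ℤ) →* G, Function.Injective f) ∧
    (∀ d : K, 2 < orderOf d → ∀ n : ℕ, 1 ≤ n →
        ∃ f : Multiplicative (Fin n → ZMod (orderOf d)) →* G, Function.Injective f) := by
  have hdisj : Disjoint (φ false).range (φ true).range := by
    rw [Subgroup.disjoint_def]
    rintro _ ⟨x, rfl⟩ ⟨y, hy⟩
    exact htriv x y hy.symm
  have hψ := ((φ false).noncommCoprod_injective (φ true) hcomm).mpr ⟨hinj false, hinj true, hdisj⟩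
  have embed : ∀ d : K, ∀ n : ℕ,
      ∃ f : Multiplicative (Fin n → ZMod (orderOf d)) →* G, Function.Injective f := by
    intro d n
    obtain ⟨Φ, hΦ⟩ := exists_injective_fin_pi_of_injective_prod _ hψ n
    obtain ⟨c, hc⟩ := exists_injective_zmod_orderOf d
    obtain ⟨f, hf⟩ := exists_injective_pi_multiplicative hΦ hc
    exact ⟨K.subtype.comp f, K.subtype_injective.comp hf⟩
  refine ⟨fun d hd n _ => ?_, fun d _ n _ => embed d n⟩
  have h := embed d n
  rw [hd] at h
  exact h -- `ZMod 0` is `ℤ` by definition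
end
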